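/- Let 𝒯 be a tree (a connected undirected graph with finitely many vertices, no cycles and no self-loops) with vertex set 𝒱 = {1,…,n} and edge set ℰ. Suppose attached to each vertex i is a Polish Borel probability space (𝒳_i, ℱ_i, P_i), and attached to each edge (i,j) ∈ ℰ with i < j is a probability law P_{ij} on (𝒳_i × 𝒳_j, ℱ_i ⊗ ℱ_j). Assume these laws are pairwise consistent: for each (i,j) ∈ ℰ, the projection of P_{ij} onto 𝒳_i is P_i and the projection onto 𝒳_j is P_j. Then there exists a probability law P on ( ∏_{i=1}^n 𝒳_i, ⊗_{i=1}^n ℱ_i ) such that the projection of P onto 𝒳_i × 𝒳_j equals P_{ij} for every (i,j) ∈ ℰ, and hence the projection of P onto 𝒳_i equals P_i for every i ∈ 𝒱. -/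

import Mathlib

/-!
Add the vertices of the tree one at a time, starting from the product of the vertex laws and
keeping the set `S` of processed vertices connected. A new vertex `v` adjacent to `S` has exactly
one neighbour `u` in `S`, since two would close a cycle. Resampling coordinate `v` from the
conditional law of `P_{uv}` given coordinate `u` (a disintegration, which exists on standard
Borel spaces) makes the law of `(x_u, x_v)` equal to `P_{uv}`, leaves the joint law of all other
coordinates unchanged, and gives `x_v` the law `P_v`.
-/

open MeasureTheory ProbabilityTheory Function

theorem MeasureTheory.Measure.map_prodMap_compProd_comap {α β γ : Type*} [MeasurableSpace α]
    [MeasurableSpace β] [MeasurableSpace γ] (μ : Measure α) [IsFiniteMeasure μ] {f : α → β}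
    (hf : Measurable f) (κ : Kernel β γ) [IsFiniteKernel κ] :
    (μ ⊗ₘ κ.comap f hf).map (Prod.map f id) = μ.map f ⊗ₘ κ := by
  refine Measure.ext_prod fun {s t} hs ht => ?_
  rw [Measure.map_apply (hf.prodMap measurable_id) (hs.prod ht), Set.preimage_prod_map_prod,
    Set.preimage_id, Measure.compProd_apply_prod (hf hs) ht, Measure.compProd_apply_prod hs ht,
    setLIntegral_map hs (κ.measurable_coe ht) hf]
  rfl

section PairMarginals

variable {ι : Type*} {X : ι → Type*} [∀ i, MeasurableSpace (X i)]

theorem map_eval_pair_swap (P : Measure (∀ i, X i)) (a b : ι) :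
    P.map (fun x => (x b, x a)) = (P.map (fun x => (x a, x b))).map Prod.swap := by
  rw [Measure.map_map measurable_swap ((measurable_pi_apply a).prodMk (measurable_pi_apply b))]
  rfl

theorem map_eval_eq_map_snd (P : Measure (∀ i, X i)) (a b : ι) :
    P.map (fun x => x b) = (P.map (fun x => (x a, x b))).map Prod.snd := by
  rw [Measure.map_map measurable_snd ((measurable_pi_apply a).prodMk (measurable_pi_apply b))]
  rfl

end PairMarginals

section GlueAlong

variable {ι : Type*} [DecidableEq ι] {X : ι → Type*} [∀ i, MeasurableSpace (X i)]
  (P : Measure (∀ i, X i)) (u v : ι) (ρ : Measure (X u × X v))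
  [StandardBorelSpace (X v)] [Nonempty (X v)] [IsFiniteMeasure ρ]

/-- Coordinate `v` of a `P`-sample is resampled from the conditional law of `ρ` given
coordinate `u`. -/
noncomputable def glueAlong : Measure (∀ i, X i) :=
  (P ⊗ₘ ρ.condKernel.comap (fun x => x u) (measurable_pi_apply u)).map
    fun p => update p.1 v p.2

instance [IsProbabilityMeasure P] : IsProbabilityMeasure (glueAlong P u v ρ) :=
  Measure.isProbabilityMeasure_map measurable_update'.aemeasurable

variable {P u v ρ}

theorem map_glueAlong_of_update_eq [SFinite P] {β : Type*} [MeasurableSpace β]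
    {f : (∀ i, X i) → β} (hf : Measurable f) (hfv : ∀ x y, f (update x v y) = f x) :
    (glueAlong P u v ρ).map f = P.map f := by
  rw [glueAlong, Measure.map_map hf measurable_update']
  have : f ∘ (fun p : (∀ i, X i) × X v => update p.1 v p.2) = f ∘ Prod.fst :=
    funext fun p => hfv p.1 p.2
  rw [this, ← Measure.map_map hf measurable_fst, ← Measure.fst, Measure.fst_compProd]

theorem map_glueAlong_eval_pair [IsFiniteMeasure P] (huv : u ≠ v)
    (hρ : ρ.fst = P.map (fun x => x u)) :
    (glueAlong P u v ρ).map (fun x => (x u, x v)) = ρ := by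
  have hm : Measurable fun x : ∀ i, X i => (x u, x v) :=
    (measurable_pi_apply u).prodMk (measurable_pi_apply v)
  rw [glueAlong, Measure.map_map hm measurable_update']
  have : (fun x : ∀ i, X i => (x u, x v)) ∘ (fun p : (∀ i, X i) × X v => update p.1 v p.2) =
      Prod.map (fun x => x u) id := by
    funext p
    simp [update_of_ne huv, Prod.map]
  rw [this, Measure.map_prodMap_compProd_comap, ← hρ, Measure.disintegrate]

end GlueAlong

theorem SimpleGraph.IsAcyclic.subsingleton_neighborSet_inter {V : Type*} {G : SimpleGraph V}
    (hG : G.IsAcyclic) {S : Set V} (hS : (G.induce S).Preconnected) {v : V} (hv : v ∉ S) :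
    (G.neighborSet v ∩ S).Subsingleton := by
  rintro u ⟨hvu : G.Adj v u, hu⟩ w ⟨hvw : G.Adj v w, hw⟩
  obtain ⟨q⟩ := hS ⟨u, hu⟩ ⟨w, hw⟩
  let q' : G.Walk u w := q.map (Embedding.induce S).toHom
  have hq' : ∀ x ∈ q'.support, x ∈ S := by
    intro x hx
    obtain ⟨y, -, rfl⟩ := List.mem_map.mp ((Walk.support_map _ q) ▸ hx)
    exact y.2
  have hedge : s(v, w) ∈ (Walk.cons hvu q').edges :=
    isBridge_iff_forall_walk_mem_edges.mp (isAcyclic_iff_forall_adj_isBridge.mp hG hvw) _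
  rw [Walk.edges_cons, List.mem_cons] at hedge
  rcases hedge with h | h
  · exact (Sym2.congr_right.mp h).symm
  · exact absurd (hq' v (q'.fst_mem_support_of_mem_edges h)) hv

namespace SimpleGraph

variable {V : Type*} {X : V → Type*} [∀ v, MeasurableSpace (X v)]
  (G : SimpleGraph V) (ν : ∀ v, Measure (X v)) (μ : ∀ a b, Measure (X a × X b))

structure IsEdgeCoupling : Prop where
  isProbabilityMeasure : ∀ a b, G.Adj a b → IsProbabilityMeasure (μ a b)
  map_fst : ∀ a b, G.Adj a b → (μ a b).map Prod.fst = ν a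
  map_swap : ∀ a b, G.Adj a b → (μ a b).map Prod.swap = μ b a

structure IsGluingOn (S : Set V) (P : Measure (∀ v, X v)) : Prop where
  isProbabilityMeasure : IsProbabilityMeasure P
  map_eval : ∀ v, P.map (fun x => x v) = ν v
  map_eval_pair : ∀ a ∈ S, ∀ b ∈ S, G.Adj a b → P.map (fun x => (x a, x b)) = μ a b

variable {G ν μ}

theorem IsEdgeCoupling.map_snd (hμ : G.IsEdgeCoupling ν μ) {a b : V} (hab : G.Adj a b) :
    (μ a b).map Prod.snd = ν b := by
  rw [← hμ.map_fst b a hab.symm, ← hμ.map_swap a b hab,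
    Measure.map_map measurable_fst measurable_swap]
  rfl

variable [DecidableEq V] [∀ v, StandardBorelSpace (X v)]

theorem IsGluingOn.exists_insert (hG : G.IsAcyclic) (hμ : G.IsEdgeCoupling ν μ) {S : Set V}
    (hS : (G.induce S).Preconnected) {P : Measure (∀ v, X v)} (hP : G.IsGluingOn ν μ S P)
    {u v : V} (hu : u ∈ S) (hv : v ∉ S) (huv : G.Adj u v) :
    ∃ P', G.IsGluingOn ν μ (insert v S) P' := by
  have := hμ.isProbabilityMeasure u v huv
  have := hP.isProbabilityMeasure
  have : Nonempty (X v) := let ⟨x⟩ := nonempty_of_isProbabilityMeasure P; ⟨x v⟩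
  have hρ : (μ u v).fst = P.map (fun x => x u) := by
    rw [Measure.fst, hμ.map_fst u v huv, hP.map_eval u]
  have hglue_uv := map_glueAlong_eval_pair huv.ne hρ
  have hne : ∀ {w}, w ∈ S → w ≠ v := fun hw h => hv (h ▸ hw)
  have hunique := hG.subsingleton_neighborSet_inter hS hv
  refine ⟨glueAlong P u v (μ u v), inferInstance, fun w => ?_, fun a ha b hb hab => ?_⟩
  · by_cases hw : w = v
    · rw [hw, map_eval_eq_map_snd _ u, hglue_uv, hμ.map_snd huv]
    · rw [map_glueAlong_of_update_eq (measurable_pi_apply w) fun x y => update_of_ne hw y x,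
        hP.map_eval]
  rcases Set.mem_insert_iff.mp ha with ha | ha <;> rcases Set.mem_insert_iff.mp hb with hb | hb
  · rw [ha, hb] at hab
    exact absurd hab G.irrefl
  · rw [ha] at hab ⊢
    rw [hunique ⟨hab, hb⟩ ⟨huv.symm, hu⟩, map_eval_pair_swap, hglue_uv, hμ.map_swap u v huv]
  · rw [hb] at hab ⊢
    rw [hunique ⟨hab.symm, ha⟩ ⟨huv.symm, hu⟩, hglue_uv]
  · rw [map_glueAlong_of_update_eq ((measurable_pi_apply a).prodMk (measurable_pi_apply b))
      fun x y => by simp [update_of_ne (hne ha), update_of_ne (hne hb)],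
      hP.map_eval_pair a ha b hb hab]

theorem IsTree.exists_isGluingOn_insert (hG : G.IsTree) (hμ : G.IsEdgeCoupling ν μ)
    {S : Set V} (hS : (G.induce S).Preconnected) (hSne : S.Nonempty) (hSu : S ≠ Set.univ)
    (hP : ∃ P, G.IsGluingOn ν μ S P) :
    ∃ v ∉ S, (G.induce (insert v S)).Preconnected ∧ ∃ P, G.IsGluingOn ν μ (insert v S) P := by
  obtain ⟨a, ha⟩ := hSne
  obtain ⟨b, hb⟩ := (Set.ne_univ_iff_exists_notMem S).mp hSu
  obtain ⟨p⟩ := hG.connected.preconnected a b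
  obtain ⟨d, -, hu, hv⟩ := p.exists_boundary_dart S ha hb
  obtain ⟨P, hP⟩ := hP
  refine ⟨d.snd, hv, ?_, hP.exists_insert hG.isAcyclic hμ hS hu hv d.adj⟩
  rw [← Set.union_singleton]
  exact (connected_induce_union (t := {d.snd}) hS .of_subsingleton hu rfl d.adj).preconnected

theorem IsTree.exists_isGluingOn_univ [Fintype V] (hG : G.IsTree) (hμ : G.IsEdgeCoupling ν μ)
    [∀ v, IsProbabilityMeasure (ν v)] : ∃ P, G.IsGluingOn ν μ Set.univ P := by
  obtain ⟨r⟩ := hG.connected.nonempty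
  have hpi : G.IsGluingOn ν μ {r} (Measure.pi ν) :=
    ⟨inferInstance, fun v => (measurePreserving_eval ν v).map_eq, fun a ha b hb hab =>
      absurd ((Set.mem_singleton_iff.mp ha).trans (Set.mem_singleton_iff.mp hb).symm) hab.ne⟩
  suffices ∀ k (S : Set V), Sᶜ.ncard = k → S.Nonempty → (G.induce S).Preconnected →
      (∃ P, G.IsGluingOn ν μ S P) → ∃ P, G.IsGluingOn ν μ Set.univ P from
    this _ {r} rfl ⟨r, rfl⟩ .of_subsingleton ⟨_, hpi⟩
  intro k
  induction k with
  | zero =>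
    intro S hk _ _ hP
    rw [Set.ncard_eq_zero, Set.compl_empty_iff] at hk
    rwa [hk] at hP
  | succ k ih =>
    intro S hk hSne hS hP
    have hSu : S ≠ Set.univ := fun h => by simp [h] at hk
    obtain ⟨v, hv, hS', hP'⟩ := hG.exists_isGluingOn_insert hμ hS hSne hSu hP
    refine ih _ ?_ (Set.insert_nonempty v S) hS' hP'
    have hcompl : (insert v S)ᶜ = Sᶜ \ {v} := by ext; simp [and_comm]
    rw [hcompl, Set.ncard_sdiff_singleton_of_mem hv, hk, Nat.add_sub_cancel]

end SimpleGraph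

section OrientedLaw

variable {ι : Type*} [LinearOrder ι] {X : ι → Type*} [∀ i, MeasurableSpace (X i)]

noncomputable def orientedLaw (Pe : ∀ i j, Measure (X i × X j)) (a b : ι) :
    Measure (X a × X b) :=
  if a < b then Pe a b else (Pe b a).map Prod.swap

theorem isEdgeCoupling_orientedLaw {G : SimpleGraph ι} {Pv : ∀ i, Measure (X i)}
    {Pe : ∀ i j, Measure (X i × X j)}
    (hPe : ∀ i j, i < j → G.Adj i j → IsProbabilityMeasure (Pe i j))
    (margFst : ∀ i j, i < j → G.Adj i j → (Pe i j).map Prod.fst = Pv i)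
    (margSnd : ∀ i j, i < j → G.Adj i j → (Pe i j).map Prod.snd = Pv j) :
    G.IsEdgeCoupling Pv (orientedLaw Pe) := by
  refine ⟨fun a b hab => ?_, fun a b hab => ?_, fun a b hab => ?_⟩ <;>
    rcases hab.ne.lt_or_gt with h | h
  · rw [orientedLaw, if_pos h]
    exact hPe a b h hab
  · rw [orientedLaw, if_neg h.not_gt]
    have := hPe b a h hab.symm
    exact Measure.isProbabilityMeasure_map measurable_swap.aemeasurable
  · rw [orientedLaw, if_pos h, margFst a b h hab]
  · rw [orientedLaw, if_neg h.not_gt, Measure.map_map measurable_fst measurable_swap]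
    exact margSnd b a h hab.symm
  · rw [orientedLaw, orientedLaw, if_pos h, if_neg h.not_gt]
  · rw [orientedLaw, orientedLaw, if_neg h.not_gt, if_pos h,
      Measure.map_map measurable_swap measurable_swap, Prod.swap_swap_eq, Measure.map_id]

end OrientedLaw

/-- Vorob'ev–Berkes–Philipp theorem, tree form. Given a tree whose
vertices carry Polish Borel probability spaces and whose edges carry pairwise-consistent
couplings, there is a law on the product space projecting onto every edge law and hence
onto every vertex law. -/
theorem vorobev_berkes_philipp_tree
    (n : ℕ) (G : SimpleGraph (Fin n)) (hG : G.IsTree)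
    (Xs : Fin n → Type)
    [∀ i, TopologicalSpace (Xs i)] [∀ i, PolishSpace (Xs i)]
    [∀ i, MeasurableSpace (Xs i)] [∀ i, BorelSpace (Xs i)]
    (Pv : ∀ i, Measure (Xs i)) (hPv : ∀ i, IsProbabilityMeasure (Pv i))
    (Pe : ∀ i j : Fin n, Measure (Xs i × Xs j))
    (hPe : ∀ i j, i < j → G.Adj i j → IsProbabilityMeasure (Pe i j))
    (margFst : ∀ i j, i < j → G.Adj i j → (Pe i j).map Prod.fst = Pv i)
    (margSnd : ∀ i j, i < j → G.Adj i j → (Pe i j).map Prod.snd = Pv j) :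
    ∃ P : Measure (∀ i, Xs i), IsProbabilityMeasure P ∧
      (∀ i j, i < j → G.Adj i j → P.map (fun x => (x i, x j)) = Pe i j) ∧
      ∀ i, P.map (fun x => x i) = Pv i := by
  have := hPv
  obtain ⟨P, hP⟩ := hG.exists_isGluingOn_univ (isEdgeCoupling_orientedLaw hPe margFst margSnd)
  refine ⟨P, hP.isProbabilityMeasure, fun i j hij hadj => ?_, hP.map_eval⟩
  rw [hP.map_eval_pair i trivial j trivial hadj, orientedLaw, if_pos hij]
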